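/- arXiv:1407.1390 — 4 statements merged into one kernel-verified Lean document; each statement's English description precedes it below -/
import Mathlib

section
/- If L is slowly varying at the origin and bounded on compact subsets of (0,A], then for every σ > 0, ε^σ = o(L(ε)) as ε → 0⁺. -/
open Filter Topology

theorem slowly_varying_beats_powers (A : ℝ) (hA : 0 < A) (L : ℝ → ℝ)
    (hLpos : ∀ ε : ℝ, 0 < ε → ε ≤ A → 0 < L ε)
    (hbdd : ∀ a b : ℝ, 0 < a → a ≤ b → b ≤ A → ∃ c C : ℝ, 0 < c ∧
      ∀ ε ∈ Set.Icc a b, c ≤ L ε ∧ L ε ≤ C)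
    (hsv : ∀ a > (0:ℝ), Tendsto (fun ε => L (a * ε) / L ε) (𝓝[>] 0) (𝓝 1))
    (σ : ℝ) (hσ : 0 < σ) :
    Tendsto (fun ε : ℝ => ε ^ σ / L ε) (𝓝[>] 0) (𝓝 0) := by
  set r : ℝ := (1/2 : ℝ) ^ (σ/2) with hr_def
  have hσ2 : (0:ℝ) < σ/2 := by linarith
  have hr_pos : 0 < r := Real.rpow_pos_of_pos (by norm_num) _
  have hr_lt1 : r < 1 := Real.rpow_lt_one (by norm_num) (by norm_num) hσ2
  -- eventual lower bound for the ratio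
  have h1 : ∀ᶠ ε in 𝓝[>] (0:ℝ), r < L ((1/2) * ε) / L ε :=
    (hsv (1/2) (by norm_num)).eventually (eventually_gt_nhds hr_lt1)
  obtain ⟨u, hu_mem, hu⟩ := mem_nhdsGT_iff_exists_Ioc_subset.1 h1
  have hu_pos : (0:ℝ) < u := hu_mem
  set ε₀ : ℝ := min u A with hε₀_def
  have hε₀_pos : 0 < ε₀ := lt_min hu_pos hA
  have hε₀A : ε₀ ≤ A := min_le_right _ _
  have hstep : ∀ x : ℝ, 0 < x → x ≤ ε₀ → r * L x ≤ L ((1/2) * x) := by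
    intro x hx hxε₀
    have hxA : x ≤ A := le_trans hxε₀ hε₀A
    have hLx : 0 < L x := hLpos x hx hxA
    have hxu : x ∈ Set.Ioc (0:ℝ) u := ⟨hx, le_trans hxε₀ (min_le_left _ _)⟩
    have := hu hxu
    have hlt : r < L ((1/2) * x) / L x := this
    exact le_of_lt ((lt_div_iff₀ hLx).1 hlt)
  -- iterate
  have key : ∀ n : ℕ, ∀ y : ℝ, 0 < y → y ≤ ε₀ → r ^ n * L y ≤ L ((1/2 : ℝ) ^ n * y) := by
    intro n
    induction n with
    | zero => intro y hy hyε₀; simp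
    | succ n ih =>
      intro y hy hyε₀
      have hpow_pos : (0:ℝ) < (1/2 : ℝ) ^ n := by positivity
      have hpow_le1 : ((1/2 : ℝ)) ^ n ≤ 1 := pow_le_one₀ (by norm_num) (by norm_num)
      have hy' : (0:ℝ) < (1/2 : ℝ) ^ n * y := by positivity
      have hy'ε₀ : (1/2 : ℝ) ^ n * y ≤ ε₀ := by nlinarith
      have h2 := hstep ((1/2 : ℝ) ^ n * y) hy' hy'ε₀
      have h3 := ih y hy hyε₀
      have heq : (1/2 : ℝ) * ((1/2 : ℝ) ^ n * y) = (1/2 : ℝ) ^ (n+1) * y := by ring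
      rw [heq] at h2
      calc r ^ (n+1) * L y = r * (r ^ n * L y) := by ring
        _ ≤ r * L ((1/2 : ℝ) ^ n * y) := by nlinarith
        _ ≤ L ((1/2 : ℝ) ^ (n+1) * y) := h2
  obtain ⟨c, C, hc_pos, hcC⟩ := hbdd (ε₀/2) ε₀ (by positivity) (by linarith) hε₀A
  set K : ℝ := ε₀ ^ (σ/2) / c with hK_def
  have hK_pos : 0 < K := by
    apply div_pos (Real.rpow_pos_of_pos hε₀_pos _) hc_pos
  -- main pointwise bound
  have hbound : ∀ ε : ℝ, 0 < ε → ε ≤ ε₀ → ε ^ σ / L ε ≤ K * ε ^ (σ/2) := by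
    intro ε hε hεε₀
    have hεA : ε ≤ A := le_trans hεε₀ hε₀A
    have hLε : 0 < L ε := hLpos ε hε hεA
    -- choose n
    have hex : ∃ n : ℕ, ε₀ < ε * 2 ^ (n+1) := by
      obtain ⟨n, hn⟩ := pow_unbounded_of_one_lt (ε₀ / ε) (by norm_num : (1:ℝ) < 2)
      exact ⟨n, by
        have : ε₀ / ε < 2 ^ (n+1) := lt_of_lt_of_le hn (by
          apply pow_le_pow_right₀ (by norm_num) (Nat.le_succ n))
        calc ε₀ = (ε₀ / ε) * ε := by field_simp
          _ < 2 ^ (n+1) * ε := by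
              apply mul_lt_mul_of_pos_right this hε
          _ = ε * 2 ^ (n+1) := by ring⟩
    set n : ℕ := Nat.find hex with hn_def
    have hn1 : ε₀ < ε * 2 ^ (n+1) := Nat.find_spec hex
    have hn2 : ε * 2 ^ n ≤ ε₀ := by
      rcases Nat.eq_zero_or_pos n with h0 | hpos
      · rw [h0]; simpa using hεε₀
      · have := Nat.find_min hex (show n - 1 < n from Nat.sub_lt hpos one_pos)
        push_neg at this
        have heq : n - 1 + 1 = n := Nat.succ_pred_eq_of_pos hpos
        rwa [heq] at this
    set y : ℝ := 2 ^ n * ε with hy_def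
    have hy_pos : 0 < y := by positivity
    have hy_le : y ≤ ε₀ := by rw [hy_def]; linarith [hn2, mul_comm ε ((2:ℝ)^n)]
    have hy_ge : ε₀/2 ≤ y := by
      have : ε * 2 ^ (n+1) = 2 * y := by rw [hy_def]; ring
      linarith [hn1.le, this ▸ hn1.le]
    have hcy : c ≤ L y := (hcC y ⟨hy_ge, hy_le⟩).1
    have hεy : (1/2 : ℝ) ^ n * y = ε := by
      rw [hy_def, ← mul_assoc, ← mul_pow]; norm_num
    have hkey := key n y hy_pos hy_le
    rw [hεy] at hkey
    have hLε_lb : c * r ^ n ≤ L ε := by nlinarith [pow_pos hr_pos n]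
    -- bound ε^σ
    have hεn : ε ≤ ε₀ * (1/2 : ℝ) ^ n := by
      have hp : (0:ℝ) < (1/2 : ℝ) ^ n := by positivity
      have hmul := mul_le_mul_of_nonneg_right hn2 hp.le
      calc ε = ε * 2 ^ n * (1/2 : ℝ) ^ n := by
            rw [mul_assoc, ← mul_pow]; norm_num
        _ ≤ ε₀ * (1/2 : ℝ) ^ n := hmul
    have hrn_eq : ((1/2 : ℝ) ^ n) ^ (σ/2) = r ^ n := by
      rw [hr_def, ← Real.rpow_natCast (1/2 : ℝ) n, ← Real.rpow_natCast ((1/2:ℝ) ^ (σ/2)) n,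
        ← Real.rpow_mul (by norm_num), ← Real.rpow_mul (by norm_num), mul_comm]
    have hε2 : ε ^ (σ/2) ≤ ε₀ ^ (σ/2) * r ^ n := by
      calc ε ^ (σ/2) ≤ (ε₀ * (1/2:ℝ) ^ n) ^ (σ/2) :=
            Real.rpow_le_rpow hε.le hεn hσ2.le
        _ = ε₀ ^ (σ/2) * ((1/2:ℝ) ^ n) ^ (σ/2) :=
            Real.mul_rpow hε₀_pos.le (by positivity)
        _ = ε₀ ^ (σ/2) * r ^ n := by rw [hrn_eq]
    have hεσ : ε ^ σ = ε ^ (σ/2) * ε ^ (σ/2) := by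
      rw [← Real.rpow_add hε]; ring_nf
    have hεhalf_pos : 0 < ε ^ (σ/2) := Real.rpow_pos_of_pos hε _
    have hrn_pos : 0 < r ^ n := pow_pos hr_pos n
    rw [div_le_iff₀ hLε, hK_def]
    calc ε ^ σ = ε ^ (σ/2) * ε ^ (σ/2) := hεσ
      _ ≤ ε ^ (σ/2) * (ε₀ ^ (σ/2) * r ^ n) := by nlinarith
      _ = (ε₀ ^ (σ/2) / c * ε ^ (σ/2)) * (c * r ^ n) := by field_simp
      _ ≤ (ε₀ ^ (σ/2) / c * ε ^ (σ/2)) * L ε := by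
          apply mul_le_mul_of_nonneg_left hLε_lb
          positivity
  -- conclusion by squeezing
  have hmem : Set.Ioc (0:ℝ) ε₀ ∈ 𝓝[>] (0:ℝ) := Ioc_mem_nhdsGT_of_mem ⟨le_refl 0, hε₀_pos⟩
  have hg : Tendsto (fun ε : ℝ => K * ε ^ (σ/2)) (𝓝[>] 0) (𝓝 0) := by
    have h0 : Tendsto (fun ε : ℝ => ε ^ (σ/2)) (𝓝[>] (0:ℝ)) (𝓝 0) := by
      have hc := (Real.continuousAt_rpow_const 0 (σ/2) (Or.inr hσ2.le)).tendsto
      rw [Real.zero_rpow hσ2.ne'] at hc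
      exact hc.mono_left nhdsWithin_le_nhds
    simpa using h0.const_mul K
  apply squeeze_zero' ?_ ?_ hg
  · filter_upwards [hmem] with ε hε
    have hLε : 0 < L ε := hLpos ε hε.1 (le_trans hε.2 hε₀A)
    exact div_nonneg (Real.rpow_nonneg hε.1.le σ) hLε.le
  · filter_upwards [hmem] with ε hε
    exact hbound ε hε.1 hε.2
end

section
/- Let G : [0,∞) → (0,∞) be continuous with t^{n+r} G(t) decreasing on (1,∞) and t^{n+r} G(t) → 0 as t → ∞. Let μ be a positive Radon measure on ℝⁿ supported in B(x₀,1) with μ(B(x₀,ε)) = o(ε^{n+r}) as ε → 0⁺ and ∫ |x−x₀|^{−n−r} dμ(x) = C < ∞. Then for every A > 1, limsup_{ε→0⁺} ε^{−n−r} ∫_{ℝⁿ} G(|x−x₀|/ε) dμ(x) ≤ C A^{n+r} G(A). -/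
/-!
Split the integral at `‖x - x₀‖ = A ε`. On the ball `closedBall x₀ (A ε)` the kernel is at most
a bound `M` of `G` on `[0, A]`, so that part contributes `M μ(closedBall x₀ (A ε)) = o(ε^{n+r})`. Outside it,
`t = ‖x - x₀‖ / ε > A > 1` and the monotonicity of `t^{n+r} G(t)` gives
`G(t) ≤ A^{n+r} G(A) ε^{n+r} ‖x - x₀‖^{-(n+r)}`, whose integral is `A^{n+r} G(A) ε^{n+r} C`.
-/

open MeasureTheory Metric Filter Topology Set

theorem le_mul_inv_pow_of_antitoneOn {G : ℝ → ℝ} {k : ℕ} {A t : ℝ}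
    (hGdec : AntitoneOn (fun t => t ^ k * G t) (Ioi 1)) (hA : 1 < A) (ht : A ≤ t) :
    G t ≤ A ^ k * G A * (t ^ k)⁻¹ := by
  have htk : 0 < t ^ k := pow_pos (by linarith) k
  rw [← div_eq_mul_inv, le_div_iff₀ htk, mul_comm]
  exact hGdec hA (hA.trans_le ht) ht

section Kernel

variable {E : Type*} [NormedAddCommGroup E] {x₀ : E} {G : ℝ → ℝ} {k : ℕ} {A M ε : ℝ}

theorem kernel_le_indicator_add
    (hGdec : AntitoneOn (fun t => t ^ k * G t) (Ioi 1)) (hA : 1 < A) (hGA : 0 ≤ G A)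
    (hM : ∀ t ∈ Icc 0 A, G t ≤ M) (hε : 0 < ε) (x : E) :
    G (‖x - x₀‖ / ε) ≤ (closedBall x₀ (A * ε)).indicator (fun _ => M) x
      + A ^ k * G A * ε ^ k * (‖x - x₀‖ ^ k)⁻¹ := by
  by_cases hx : x ∈ closedBall x₀ (A * ε)
  · have hle : ‖x - x₀‖ / ε ≤ A := by
      rw [div_le_iff₀ hε]
      simpa [dist_eq_norm] using hx
    rw [indicator_of_mem hx]
    have htail : 0 ≤ A ^ k * G A * ε ^ k * (‖x - x₀‖ ^ k)⁻¹ := by positivity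
    linarith [hM _ ⟨by positivity, hle⟩]
  · rw [mem_closedBall, dist_eq_norm] at hx
    have hAle : A ≤ ‖x - x₀‖ / ε := by
      rw [le_div_iff₀ hε]
      exact (not_le.mp hx).le
    rw [indicator_of_notMem (by rwa [mem_closedBall, dist_eq_norm]), zero_add]
    calc G (‖x - x₀‖ / ε) ≤ A ^ k * G A * ((‖x - x₀‖ / ε) ^ k)⁻¹ :=
          le_mul_inv_pow_of_antitoneOn hGdec hA hAle
      _ = A ^ k * G A * ε ^ k * (‖x - x₀‖ ^ k)⁻¹ := by
          rw [div_pow, inv_div]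
          ring

theorem integral_kernel_le [MeasurableSpace E] [OpensMeasurableSpace E] {μ : Measure E}
    [IsFiniteMeasure μ]
    (hG0 : ∀ t ≥ (0 : ℝ), 0 ≤ G t) (hGdec : AntitoneOn (fun t => t ^ k * G t) (Ioi 1))
    (hA : 1 < A) (hM : ∀ t ∈ Icc 0 A, G t ≤ M) (hε : 0 < ε)
    (hinteg : Integrable (fun x => (‖x - x₀‖ ^ k)⁻¹) μ) :
    ∫ x, G (‖x - x₀‖ / ε) ∂μ ≤ M * μ.real (closedBall x₀ (A * ε))
      + A ^ k * G A * ε ^ k * ∫ x, (‖x - x₀‖ ^ k)⁻¹ ∂μ := by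
  have hGA : 0 ≤ G A := hG0 A (by linarith)
  have hball : Integrable ((closedBall x₀ (A * ε)).indicator fun _ => M) μ :=
    (integrable_const M).indicator measurableSet_closedBall
  calc ∫ x, G (‖x - x₀‖ / ε) ∂μ
      ≤ ∫ x, ((closedBall x₀ (A * ε)).indicator (fun _ => M) x
          + A ^ k * G A * ε ^ k * (‖x - x₀‖ ^ k)⁻¹) ∂μ :=
        integral_mono_of_nonneg (ae_of_all _ fun x => hG0 _ (by positivity))
          (hball.add (hinteg.const_mul _))
          (ae_of_all _ (kernel_le_indicator_add hGdec hA hGA hM hε))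
    _ = M * μ.real (closedBall x₀ (A * ε))
          + A ^ k * G A * ε ^ k * ∫ x, (‖x - x₀‖ ^ k)⁻¹ ∂μ := by
        rw [integral_add hball (hinteg.const_mul _), integral_indicator_const _ measurableSet_closedBall,
          integral_const_mul, smul_eq_mul, mul_comm M]

end Kernel

theorem tendsto_measureReal_closedBall_mul_div_pow {X : Type*} [PseudoMetricSpace X]
    [MeasurableSpace X] {μ : Measure X} [IsFiniteMeasure μ] {x₀ : X} {k : ℕ} {c : ℝ} (hc : 0 < c)
    (h : Tendsto (fun ε : ℝ => μ.real (ball x₀ ε) / ε ^ k) (𝓝[>] 0) (𝓝 0)) :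
    Tendsto (fun ε : ℝ => μ.real (closedBall x₀ (c * ε)) / ε ^ k) (𝓝[>] 0) (𝓝 0) := by
  have hdil : Tendsto (fun ε : ℝ => 2 * c * ε) (𝓝[>] 0) (𝓝[>] 0) := by
    refine tendsto_nhdsWithin_of_tendsto_nhds_of_eventually_within _ ?_ ?_
    · simpa using ((continuous_const_mul (2 * c)).tendsto 0).mono_left nhdsWithin_le_nhds
    · filter_upwards [self_mem_nhdsWithin] with ε (hε : 0 < ε)
      exact mul_pos (by positivity) hε
  have hupper := (h.comp hdil).const_mul ((2 * c) ^ k)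
  rw [mul_zero] at hupper
  refine tendsto_of_tendsto_of_tendsto_of_le_of_le' tendsto_const_nhds hupper ?_ ?_
  · filter_upwards [self_mem_nhdsWithin] with ε (hε : 0 < ε)
    positivity
  · filter_upwards [self_mem_nhdsWithin] with ε (hε : 0 < ε)
    have hsub : closedBall x₀ (c * ε) ⊆ ball x₀ (2 * c * ε) :=
      closedBall_subset_ball (by nlinarith)
    calc μ.real (closedBall x₀ (c * ε)) / ε ^ k ≤ μ.real (ball x₀ (2 * c * ε)) / ε ^ k := by
          gcongr
          exact measure_ne_top μ _
      _ = (2 * c) ^ k * (μ.real (ball x₀ (2 * c * ε)) / (2 * c * ε) ^ k) := by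
          rw [mul_pow (2 * c)]
          field_simp

theorem limsup_kernel_bound_general (n r : ℕ) (G : ℝ → ℝ) (hGc : Continuous G)
    (hGpos : ∀ t ≥ (0:ℝ), 0 < G t)
    (hGdec : AntitoneOn (fun t => t ^ (n + r) * G t) (Set.Ioi 1))
    (μ : Measure (EuclideanSpace ℝ (Fin n))) [IsFiniteMeasure μ]
    (x₀ : EuclideanSpace ℝ (Fin n))
    (hsmall : Tendsto (fun ε : ℝ => (μ (ball x₀ ε)).toReal / ε ^ (n + r)) (𝓝[>] 0) (𝓝 0))
    (C : ℝ)
    (hinteg : Integrable (fun x => ‖x - x₀‖ ^ (-((n : ℝ) + r))) μ)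
    (hint : ∫ x, ‖x - x₀‖ ^ (-((n : ℝ) + r)) ∂μ = C)
    (A : ℝ) (hA : 1 < A) :
    Filter.limsup (fun ε : ℝ => ε ^ (-((n : ℝ) + r)) * ∫ x, G (‖x - x₀‖ / ε) ∂μ) (𝓝[>] 0)
      ≤ C * A ^ (n + r) * G A := by
  have hrpow (s : ℝ) : s ^ (-((n : ℝ) + r)) = (s ^ (n + r))⁻¹ := by
    rw [← Nat.cast_add, Real.rpow_neg_natCast, zpow_neg, zpow_natCast]
  simp only [hrpow] at hinteg hint
  obtain ⟨M, hM⟩ := isCompact_Icc.bddAbove_image hGc.continuousOn (K := Icc 0 (A : ℝ))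
  replace hM : ∀ t ∈ Icc 0 A, G t ≤ M := fun t ht => hM (mem_image_of_mem G ht)
  have hG0 : ∀ t ≥ (0 : ℝ), 0 ≤ G t := fun t ht => (hGpos t ht).le
  have hlim : Tendsto (fun ε : ℝ => M * (μ.real (closedBall x₀ (A * ε)) / ε ^ (n + r))
      + C * A ^ (n + r) * G A) (𝓝[>] 0) (𝓝 (C * A ^ (n + r) * G A)) := by
    have hball := tendsto_measureReal_closedBall_mul_div_pow (by linarith : 0 < A) hsmall
    simpa using (hball.const_mul M).add_const (C * A ^ (n + r) * G A)
  refine (limsup_le_limsup ?_ ?_ hlim.isBoundedUnder_le).trans_eq hlim.limsup_eq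
  · filter_upwards [self_mem_nhdsWithin] with ε (hε : 0 < ε)
    rw [hrpow, inv_mul_le_iff₀ (by positivity)]
    calc ∫ x, G (‖x - x₀‖ / ε) ∂μ
        ≤ M * μ.real (closedBall x₀ (A * ε)) + A ^ (n + r) * G A * ε ^ (n + r) * C :=
          hint ▸ integral_kernel_le hG0 hGdec hA hM hε hinteg
      _ = ε ^ (n + r) * (M * (μ.real (closedBall x₀ (A * ε)) / ε ^ (n + r))
          + C * A ^ (n + r) * G A) := by
          field_simp
  · refine IsBoundedUnder.isCoboundedUnder_le ⟨0, eventually_map.2 ?_⟩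
    filter_upwards [self_mem_nhdsWithin] with ε (hε : 0 < ε)
    exact mul_nonneg (by positivity) (integral_nonneg fun x => hG0 _ (by positivity))

theorem limsup_kernel_bound (n r : ℕ) (G : ℝ → ℝ) (hGc : Continuous G)
    (hGpos : ∀ t ≥ (0:ℝ), 0 < G t)
    (hGdec : AntitoneOn (fun t => t ^ (n + r) * G t) (Set.Ioi 1))
    (hGlim : Tendsto (fun t => t ^ (n + r) * G t) atTop (𝓝 0))
    (μ : Measure (EuclideanSpace ℝ (Fin n))) [IsFiniteMeasure μ]
    (x₀ : EuclideanSpace ℝ (Fin n))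
    (hsupp : μ (closedBall x₀ 1)ᶜ = 0) (hpt : μ {x₀} = 0)
    (hsmall : Tendsto (fun ε : ℝ => (μ (ball x₀ ε)).toReal / ε ^ (n + r)) (𝓝[>] 0) (𝓝 0))
    (C : ℝ)
    (hinteg : Integrable (fun x => ‖x - x₀‖ ^ (-((n : ℝ) + r))) μ)
    (hint : ∫ x, ‖x - x₀‖ ^ (-((n : ℝ) + r)) ∂μ = C)
    (A : ℝ) (hA : 1 < A) :
    Filter.limsup (fun ε : ℝ => ε ^ (-((n : ℝ) + r)) * ∫ x, G (‖x - x₀‖ / ε) ∂μ) (𝓝[>] 0)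
      ≤ C * A ^ (n + r) * G A :=
  limsup_kernel_bound_general n r G hGc hGpos hGdec μ x₀ hsmall C hinteg hint A hA
end

section
/- Let f : ℝⁿ → ℂ be continuous with |f(x)| ≤ C e^{M(k‖x‖)} for some k, where M is increasing and superadditive with M(t)/t → ∞. Suppose K : ℝⁿ × ℝⁿ → ℂ satisfies |K(x,y)| ≤ C_l e^{−M(l‖x−y‖)} for every l ∈ ℕ and ∫ K(x,y) dy = 1 for all x. Then for the dilated kernels K_λ(x,y) = 2^{nλ} K(2^λ x + z, 2^λ y + z), the integrals ∫ K_λ(x,y) f(y) dy converge to f(x) as λ → ∞, uniformly for x in compact sets and z ∈ ℝⁿ. -/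
open MeasureTheory Metric Filter Topology Real Module

lemma aux_exp_neg_norm_integrable (n : ℕ) :
    Integrable (fun u : EuclideanSpace ℝ (Fin n) => Real.exp (-‖u‖)) := by
  have hnr : (finrank ℝ (EuclideanSpace ℝ (Fin n)) : ℝ) < ((n : ℝ) + 1) := by
    rw [finrank_euclideanSpace_fin]; linarith
  have h := (integrable_one_add_norm (E := EuclideanSpace ℝ (Fin n)) (μ := volume) hnr).const_mul
      ((Nat.factorial (n+1) : ℝ) * Real.exp 1)
  refine h.mono' ((Real.continuous_exp.comp continuous_norm.neg).aestronglyMeasurable) ?_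
  filter_upwards with u
  rw [Real.norm_eq_abs, abs_of_nonneg (Real.exp_pos _).le]
  set t := ‖u‖ with ht
  have h0 : (0:ℝ) ≤ t := norm_nonneg u
  have h1 : (0:ℝ) < 1 + t := by positivity
  have key : (1 + t)^(n+1) / (Nat.factorial (n+1) : ℝ) ≤ Real.exp (1 + t) :=
    Real.pow_div_factorial_le_exp (x := 1 + t) (by positivity) (n+1)
  have hrw : (1 + t) ^ (-((n:ℝ) + 1)) = ((1 + t)^(n+1 : ℕ))⁻¹ := by
    rw [← Real.rpow_natCast (1+t) (n+1), ← Real.rpow_neg h1.le]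
    norm_num
  rw [hrw]
  have hfac : (0:ℝ) < (Nat.factorial (n+1) : ℝ) := by positivity
  rw [div_le_iff₀ hfac, Real.exp_add] at key
  rw [← div_eq_mul_inv, le_div_iff₀ (by positivity)]
  have hexp : Real.exp (-t) * (1+t)^(n+1) ≤ Real.exp (-t) * (Real.exp 1 * Real.exp t * (Nat.factorial (n+1):ℝ)) :=
    mul_le_mul_of_nonneg_left key (Real.exp_pos _).le
  calc Real.exp (-t) * (1+t)^(n+1) ≤ Real.exp (-t) * (Real.exp 1 * Real.exp t * (Nat.factorial (n+1):ℝ)) := hexp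
    _ = (Nat.factorial (n+1):ℝ) * Real.exp 1 * (Real.exp (-t) * Real.exp t) := by ring
    _ = (Nat.factorial (n+1):ℝ) * Real.exp 1 := by rw [← Real.exp_add, neg_add_cancel, Real.exp_zero, mul_one]

lemma aux_tail_small (n : ℕ) {ε : ℝ} (hε : 0 < ε) :
    ∃ T : ℝ, ∀ T' ≥ T,
      (∫ u in {u : EuclideanSpace ℝ (Fin n) | T' ≤ ‖u‖}, Real.exp (-‖u‖)) ≤ ε := by
  have hint := aux_exp_neg_norm_integrable n
  have hsm : ∀ i : ℕ, MeasurableSet (closedBall (0 : EuclideanSpace ℝ (Fin n)) i) :=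
    fun _ => measurableSet_closedBall
  have hmono : Monotone (fun i : ℕ => closedBall (0 : EuclideanSpace ℝ (Fin n)) i) :=
    fun i j hij => closedBall_subset_closedBall (by exact_mod_cast hij)
  have hun : (⋃ i : ℕ, closedBall (0 : EuclideanSpace ℝ (Fin n)) i) = Set.univ := by
    ext u
    simp only [Set.mem_iUnion, mem_closedBall, dist_zero_right, Set.mem_univ, iff_true]
    obtain ⟨i, hi⟩ := exists_nat_ge ‖u‖
    exact ⟨i, hi⟩
  have htend := tendsto_setIntegral_of_monotone hsm hmono (by rw [hun]; exact hint.integrableOn)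
  rw [hun, setIntegral_univ] at htend
  set L := ∫ u : EuclideanSpace ℝ (Fin n), Real.exp (-‖u‖) with hL
  have hev : ∀ᶠ i : ℕ in atTop,
      L - ε < ∫ u in closedBall (0 : EuclideanSpace ℝ (Fin n)) i, Real.exp (-‖u‖) :=
    htend.eventually (eventually_gt_nhds (by linarith))
  obtain ⟨m, hm⟩ := hev.exists
  refine ⟨(m : ℝ) + 1, fun T' hT' => ?_⟩
  have hcompl : (∫ u in (closedBall (0 : EuclideanSpace ℝ (Fin n)) m)ᶜ, Real.exp (-‖u‖)) ≤ ε := by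
    have hadd := integral_add_compl (hsm m) hint
    have : (∫ u in (closedBall (0 : EuclideanSpace ℝ (Fin n)) m)ᶜ, Real.exp (-‖u‖))
        = L - ∫ u in closedBall (0 : EuclideanSpace ℝ (Fin n)) m, Real.exp (-‖u‖) := by
      rw [hL, ← hadd]; ring
    rw [this]; linarith
  refine le_trans ?_ hcompl
  apply setIntegral_mono_set (hint.integrableOn)
    (Filter.Eventually.of_forall fun u => (Real.exp_pos _).le)
  apply HasSubset.Subset.eventuallyLE
  intro u hu
  simp only [Set.mem_setOf_eq] at hu
  simp only [Set.mem_compl_iff, mem_closedBall, dist_zero_right, not_le]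
  linarith


set_option maxHeartbeats 1000000 in
theorem dilated_kernel_convergence (n : ℕ) (M : ℝ → ℝ)
    (hMmono : MonotoneOn M (Set.Ici 0))
    (hMnn : ∀ t ≥ (0:ℝ), 0 ≤ M t)
    (hMsuper : ∀ a ≥ (0:ℝ), ∀ b ≥ (0:ℝ), M a + M b ≤ M (a + b))
    (hMgrow : Tendsto (fun t => M t / t) atTop atTop)
    (f : EuclideanSpace ℝ (Fin n) → ℂ) (hf : Continuous f)
    (Cf : ℝ) (k : ℕ) (hfb : ∀ x, ‖f x‖ ≤ Cf * Real.exp (M (k * ‖x‖)))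
    (K : EuclideanSpace ℝ (Fin n) → EuclideanSpace ℝ (Fin n) → ℂ)
    (hKcont : Continuous fun p : EuclideanSpace ℝ (Fin n) × EuclideanSpace ℝ (Fin n) =>
      K p.1 p.2)
    (hK : ∀ l : ℕ, ∃ Cl : ℝ, 0 < Cl ∧
      ∀ x y, ‖K x y‖ ≤ Cl * Real.exp (-(M (l * ‖x - y‖))))
    (hK1 : ∀ x, ∫ y, K x y = 1) :
    ∀ S : Set (EuclideanSpace ℝ (Fin n)), IsCompact S → ∀ δ > (0:ℝ), ∃ Λ : ℝ,
      ∀ lam ≥ Λ, ∀ z : EuclideanSpace ℝ (Fin n), ∀ x ∈ S,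
        ‖(∫ y, ((2:ℝ) ^ ((n : ℝ) * lam)) •
            (K ((2:ℝ) ^ lam • x + z) ((2:ℝ) ^ lam • y + z) * f y)) - f x‖ < δ := by
  intro S hS δ hδ
  -- basic facts about M
  have hMle : ∀ a b : ℝ, 0 ≤ a → a ≤ b → M a ≤ M b := fun a b ha hab =>
    hMmono (Set.mem_Ici.mpr ha) (Set.mem_Ici.mpr (ha.trans hab)) hab
  obtain ⟨t₀, ht₀⟩ := eventually_atTop.mp (hMgrow.eventually_ge_atTop 1)
  set T₀ : ℝ := max t₀ 1 with hT₀def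
  have hT₀0 : (0:ℝ) ≤ T₀ := le_trans zero_le_one (le_max_right _ _)
  have hT₀ : ∀ t ≥ T₀, t ≤ M t := by
    intro t ht
    have h1 : (1:ℝ) ≤ t := le_trans (le_max_right _ _) ht
    have h2 := ht₀ t (le_trans (le_max_left _ _) ht)
    rw [le_div_iff₀ (by linarith)] at h2
    linarith
  have hMlin : ∀ t ≥ (0:ℝ), -(M t) ≤ T₀ - t := by
    intro t ht
    rcases le_or_gt T₀ t with h | h
    · linarith [hT₀ t h]
    · linarith [hMnn t ht]
  have hMexp : ∀ t ≥ (0:ℝ), Real.exp (-(M t)) ≤ Real.exp T₀ * Real.exp (-t) := by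
    intro t ht
    rw [← Real.exp_add]
    exact Real.exp_le_exp.mpr (by linarith [hMlin t ht])
  -- constants
  obtain ⟨C, hC, hKb⟩ := hK (k + 2)
  have hCf0 : 0 ≤ Cf := by
    have h1 := hfb 0
    have h2 := norm_nonneg (f 0)
    nlinarith [Real.exp_pos (M (k * ‖(0 : EuclideanSpace ℝ (Fin n))‖))]
  obtain ⟨R₀, hR₀⟩ := hS.isBounded.subset_closedBall 0
  set R : ℝ := max R₀ 0 with hRdef
  have hR0 : (0:ℝ) ≤ R := le_max_right _ _
  have hSR : S ⊆ closedBall 0 R := hR₀.trans (closedBall_subset_closedBall (le_max_left _ _))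
  set A : ℝ := ∫ u : EuclideanSpace ℝ (Fin n), Real.exp (-‖u‖) with hAdef
  have hA0 : 0 ≤ A := integral_nonneg fun u => (Real.exp_pos _).le
  set B₂ : ℝ := M (k * R * (k + 1)) + T₀ + k * R with hB₂def
  have hMB : 0 ≤ M (k * R * (k + 1)) := hMnn _ (by positivity)
  have hB₂0 : 0 ≤ B₂ := by positivity
  set D : ℝ := 2 * C * Cf * Real.exp B₂ with hDdef
  have hD0 : 0 ≤ D := by positivity
  -- the key exponential inequality
  have hkey : ∀ t ≥ (0:ℝ),
      Real.exp (M (k * R + k * t)) * Real.exp (-(M ((k + 2) * t))) ≤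
        Real.exp B₂ * Real.exp (-t) := by
    intro t h0t
    rw [← Real.exp_add, ← Real.exp_add]
    apply Real.exp_le_exp.mpr
    rcases le_or_gt t ((k:ℝ) * R) with hcase | hcase
    · have h1 : M (k * R + k * t) ≤ M (k * R * (k + 1)) :=
        hMle _ _ (by positivity) (by nlinarith)
      have h2 : 0 ≤ M ((k + 2) * t) := hMnn _ (by positivity)
      rw [hB₂def]; linarith
    · have hsa := hMsuper (k * R + k * t) (by positivity) (2 * t - k * R) (by linarith)
      have heq : (k * R + k * t) + (2 * t - k * R) = ((k:ℝ) + 2) * t := by ring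
      rw [heq] at hsa
      have h4 : M t ≤ M (2 * t - k * R) := hMle _ _ h0t (by linarith)
      have h5 := hMlin t h0t
      have hkR : (0:ℝ) ≤ (k:ℝ) * R := by positivity
      rw [hB₂def]; linarith [hMB]
  -- choose ε₀ and the modulus of continuity
  set ε₀ : ℝ := δ / (2 * (C * Real.exp T₀ * A + 1)) with hε₀def
  have hε₀pos : 0 < ε₀ := by positivity
  have hUC := (isCompact_closedBall (0 : EuclideanSpace ℝ (Fin n)) (R + 1)).uniformContinuousOn_of_continuous
    hf.continuousOn
  obtain ⟨r₁, hr₁pos, hr₁⟩ := (Metric.uniformContinuousOn_iff_le.mp hUC) ε₀ hε₀pos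
  set r : ℝ := min r₁ 1 with hrdef
  have hrpos : 0 < r := lt_min hr₁pos one_pos
  have hrr₁ : r ≤ r₁ := min_le_left _ _
  have hr1 : r ≤ 1 := min_le_right _ _
  -- tail cutoff
  obtain ⟨T₁, hT₁⟩ := aux_tail_small n (ε := δ / (2 * (D + 1))) (by positivity)
  refine ⟨max 0 (Real.logb 2 (max T₁ 1 / r)), fun lam hlam z x hxS => ?_⟩
  have hlam0 : 0 ≤ lam := le_trans (le_max_left _ _) hlam
  set c : ℝ := (2:ℝ) ^ lam with hcdef
  have hc1 : 1 ≤ c := by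
    rw [hcdef, show (1:ℝ) = (2:ℝ) ^ (0:ℝ) by rw [Real.rpow_zero]]
    exact Real.rpow_le_rpow_left_iff (by norm_num) |>.mpr hlam0
  have hc0 : 0 < c := lt_of_lt_of_le one_pos hc1
  have hcr : max T₁ 1 ≤ c * r := by
    have hle : Real.logb 2 (max T₁ 1 / r) ≤ lam := le_trans (le_max_right _ _) hlam
    have h2 : max T₁ 1 / r ≤ c := by
      calc max T₁ 1 / r = (2:ℝ) ^ Real.logb 2 (max T₁ 1 / r) := by
            rw [Real.rpow_logb two_pos (by norm_num) (by positivity)]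
        _ ≤ c := by
            rw [hcdef]
            exact Real.rpow_le_rpow_left_iff (by norm_num) |>.mpr hle
    rw [div_le_iff₀ hrpos] at h2
    linarith
  have hT₁c : T₁ ≤ c * r := le_trans (le_max_left _ _) hcr
  have h1cr : (1:ℝ) ≤ c * r := le_trans (le_max_right _ _) hcr
  have hxR : ‖x‖ ≤ R := by
    have := hSR hxS
    rwa [mem_closedBall, dist_zero_right] at this
  set w : EuclideanSpace ℝ (Fin n) := c • x + z with hwdef
  set g : EuclideanSpace ℝ (Fin n) → ℂ := fun u => K w (w + u) * f (x + c⁻¹ • u) with hgdef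
  -- pointwise bounds
  have hKu : ∀ u : EuclideanSpace ℝ (Fin n),
      ‖K w (w + u)‖ ≤ C * Real.exp (-(M ((k + 2) * ‖u‖))) := by
    intro u
    have h := hKb w (w + u)
    have : w - (w + u) = -u := by abel
    rw [this, norm_neg] at h
    push_cast at h
    exact h
  have hfar : ∀ u : EuclideanSpace ℝ (Fin n),
      ‖f (x + c⁻¹ • u)‖ ≤ Cf * Real.exp (M (k * R + k * ‖u‖)) := by
    intro u
    have h1 := hfb (x + c⁻¹ • u)
    have h2 : ‖x + c⁻¹ • u‖ ≤ R + ‖u‖ := by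
      have h3 : ‖c⁻¹ • u‖ ≤ ‖u‖ := by
        rw [norm_smul, Real.norm_eq_abs, abs_of_pos (inv_pos.mpr hc0)]
        nlinarith [norm_nonneg u, inv_le_one_of_one_le₀ hc1, inv_pos.mpr hc0]
      calc ‖x + c⁻¹ • u‖ ≤ ‖x‖ + ‖c⁻¹ • u‖ := norm_add_le _ _
        _ ≤ R + ‖u‖ := add_le_add hxR h3
    refine h1.trans (mul_le_mul_of_nonneg_left (Real.exp_le_exp.mpr
      (hMle _ _ (by positivity) (by nlinarith [norm_nonneg (x + c⁻¹ • u)]))) hCf0)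
  have hfxb : ∀ u : EuclideanSpace ℝ (Fin n), ‖f x‖ ≤ Cf * Real.exp (M (k * R + k * ‖u‖)) := by
    intro u
    refine (hfb x).trans (mul_le_mul_of_nonneg_left (Real.exp_le_exp.mpr
      (hMle _ _ (by positivity) ?_)) hCf0)
    nlinarith [norm_nonneg u, norm_nonneg x, Nat.cast_nonneg (α := ℝ) k]
  set h : EuclideanSpace ℝ (Fin n) → ℂ := fun u => K w (w + u) * (f (x + c⁻¹ • u) - f x)
    with hhdef
  have hhb : ∀ u, ‖h u‖ ≤ D * Real.exp (-‖u‖) := by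
    intro u
    have e1 : ‖h u‖ ≤ (C * Real.exp (-(M ((k + 2) * ‖u‖)))) *
        (Cf * Real.exp (M (k * R + k * ‖u‖)) + Cf * Real.exp (M (k * R + k * ‖u‖))) := by
      rw [hhdef]
      calc ‖K w (w + u) * (f (x + c⁻¹ • u) - f x)‖
          = ‖K w (w + u)‖ * ‖f (x + c⁻¹ • u) - f x‖ := norm_mul _ _
        _ ≤ (C * Real.exp (-(M ((k + 2) * ‖u‖)))) * (‖f (x + c⁻¹ • u)‖ + ‖f x‖) :=
            mul_le_mul (hKu u) (norm_sub_le _ _) (norm_nonneg _) (by positivity)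
        _ ≤ _ := mul_le_mul_of_nonneg_left (add_le_add (hfar u) (hfxb u)) (by positivity)
    have e2 := hkey ‖u‖ (norm_nonneg u)
    calc ‖h u‖ ≤ _ := e1
      _ = 2 * C * Cf * (Real.exp (M (k * R + k * ‖u‖)) * Real.exp (-(M ((k + 2) * ‖u‖)))) := by
          ring
      _ ≤ 2 * C * Cf * (Real.exp B₂ * Real.exp (-‖u‖)) :=
          mul_le_mul_of_nonneg_left e2 (by positivity)
      _ = D * Real.exp (-‖u‖) := by rw [hDdef]; ring
  -- integrability
  have hKw : Integrable (fun y => K w y) := by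
    by_contra hcon
    have hz := integral_undef hcon
    rw [hK1 w] at hz
    exact one_ne_zero hz
  have hKwt : Integrable (fun u : EuclideanSpace ℝ (Fin n) => K w (w + u)) :=
    hKw.comp_add_left w
  have hKfx : Integrable (fun u : EuclideanSpace ℝ (Fin n) => K w (w + u) * f x) :=
    hKwt.mul_const (f x)
  have hhc : Continuous h := by
    have h1 : Continuous fun u : EuclideanSpace ℝ (Fin n) => K w (w + u) :=
      hKcont.comp (continuous_const.prodMk (continuous_const.add continuous_id))
    exact h1.mul ((hf.comp (continuous_const.add (continuous_const_smul _))).sub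
      continuous_const)
  have hhi : Integrable h := by
    refine ((aux_exp_neg_norm_integrable n).const_mul D).mono' hhc.aestronglyMeasurable ?_
    filter_upwards with u
    exact hhb u
  have hgi : Integrable g := by
    have hadd := hhi.add hKfx
    have : g = fun u => h u + K w (w + u) * f x := by
      funext u
      rw [hhdef, hgdef]
      simp only
      ring
    rw [this]
    exact hadd
  have hKint1 : (∫ u : EuclideanSpace ℝ (Fin n), K w (w + u)) = 1 := by
    have := integral_add_left_eq_self (μ := (volume : Measure (EuclideanSpace ℝ (Fin n))))
      (fun y => K w y) w
    rw [this, hK1 w]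
  -- change of variables identity
  have hIdent : (∫ y, ((2:ℝ) ^ ((n : ℝ) * lam)) • (K w (c • y + z) * f y)) = ∫ u, g u := by
    have e2 : ∀ v : EuclideanSpace ℝ (Fin n),
        K w (c • (x + v) + z) * f (x + v) = g (c • v) := by
      intro v
      rw [hgdef]
      simp only
      rw [inv_smul_smul₀ (ne_of_gt hc0)]
      congr 2
      rw [hwdef, smul_add]
      abel
    have e1 : (∫ y, K w (c • y + z) * f y) = ∫ v, K w (c • (x + v) + z) * f (x + v) :=
      (integral_add_left_eq_self (μ := (volume : Measure (EuclideanSpace ℝ (Fin n))))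
        (fun y => K w (c • y + z) * f y) x).symm
    calc (∫ y, ((2:ℝ) ^ ((n : ℝ) * lam)) • (K w (c • y + z) * f y))
        = ((2:ℝ) ^ ((n : ℝ) * lam)) • (∫ y, K w (c • y + z) * f y) :=
          integral_smul _ _
      _ = ((2:ℝ) ^ ((n : ℝ) * lam)) • (∫ v, g (c • v)) := by
          rw [e1]
          congr 1
          exact integral_congr_ae (Filter.Eventually.of_forall e2)
      _ = ((2:ℝ) ^ ((n : ℝ) * lam)) •
            (|((c ^ finrank ℝ (EuclideanSpace ℝ (Fin n)))⁻¹)| • ∫ u, g u) := by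
          rw [Measure.integral_comp_smul volume g c]
      _ = ∫ u, g u := by
          rw [finrank_euclideanSpace_fin, smul_smul,
            abs_of_pos (inv_pos.mpr (pow_pos hc0 n))]
          have hone : (2:ℝ) ^ ((n : ℝ) * lam) * ((c:ℝ) ^ n)⁻¹ = 1 := by
            rw [hcdef, ← Real.rpow_natCast ((2:ℝ) ^ lam) n,
              ← Real.rpow_mul (by norm_num : (0:ℝ) ≤ 2), mul_comm lam (n:ℝ)]
            exact mul_inv_cancel₀ (ne_of_gt (Real.rpow_pos_of_pos two_pos _))
          rw [hone, one_smul]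
  have hfxint : (∫ u : EuclideanSpace ℝ (Fin n), K w (w + u) * f x) = f x := by
    rw [integral_mul_const, hKint1, one_mul]
  have hsubEq : (∫ u, g u) - f x = ∫ u, h u := by
    have hrw : h = fun u => g u - K w (w + u) * f x := by
      funext u
      rw [hhdef, hgdef]
      simp only
      ring
    rw [hrw, integral_sub hgi hKfx, hfxint]
  rw [hIdent, hsubEq]
  -- final estimate
  have hnormb := norm_integral_le_integral_norm (μ := (volume : Measure (EuclideanSpace ℝ (Fin n)))) h
  have hnormint : Integrable (fun u => ‖h u‖) := hhi.norm
  have hsplit : (∫ u, ‖h u‖) = (∫ u in ball (0:EuclideanSpace ℝ (Fin n)) (c * r), ‖h u‖)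
      + ∫ u in (ball (0:EuclideanSpace ℝ (Fin n)) (c * r))ᶜ, ‖h u‖ :=
    (integral_add_compl measurableSet_ball hnormint).symm
  have hnear : (∫ u in ball (0:EuclideanSpace ℝ (Fin n)) (c * r), ‖h u‖)
      ≤ C * Real.exp T₀ * A * ε₀ := by
    have hb : ∀ u ∈ ball (0:EuclideanSpace ℝ (Fin n)) (c * r),
        ‖h u‖ ≤ (C * Real.exp T₀ * ε₀) * Real.exp (-‖u‖) := by
      intro u hu
      rw [mem_ball, dist_zero_right] at hu
      have hKexp : ‖K w (w + u)‖ ≤ C * (Real.exp T₀ * Real.exp (-‖u‖)) := by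
        refine (hKu u).trans (mul_le_mul_of_nonneg_left ?_ hC.le)
        refine le_trans (Real.exp_le_exp.mpr (neg_le_neg (hMle ‖u‖ ((k + 2) * ‖u‖)
          (norm_nonneg u) ?_))) (hMexp ‖u‖ (norm_nonneg u))
        nlinarith [norm_nonneg u, Nat.cast_nonneg (α := ℝ) k]
      have hfdiff : ‖f (x + c⁻¹ • u) - f x‖ ≤ ε₀ := by
        have hxmem : x ∈ closedBall (0:EuclideanSpace ℝ (Fin n)) (R + 1) := by
          rw [mem_closedBall, dist_zero_right]
          linarith
        have hcu : ‖c⁻¹ • u‖ ≤ r := by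
          rw [norm_smul, Real.norm_eq_abs, abs_of_pos (inv_pos.mpr hc0),
            inv_mul_le_iff₀ hc0]
          exact hu.le
        have hymem : x + c⁻¹ • u ∈ closedBall (0:EuclideanSpace ℝ (Fin n)) (R + 1) := by
          rw [mem_closedBall, dist_zero_right]
          calc ‖x + c⁻¹ • u‖ ≤ ‖x‖ + ‖c⁻¹ • u‖ := norm_add_le _ _
            _ ≤ R + 1 := add_le_add hxR (hcu.trans hr1)
        have hd := hr₁ (x + c⁻¹ • u) hymem x hxmem (by
          rw [dist_eq_norm]
          simpa using hcu.trans hrr₁)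
        rwa [dist_eq_norm] at hd
      calc ‖h u‖ = ‖K w (w + u)‖ * ‖f (x + c⁻¹ • u) - f x‖ := by
            rw [hhdef]; exact norm_mul _ _
        _ ≤ (C * (Real.exp T₀ * Real.exp (-‖u‖))) * ε₀ :=
            mul_le_mul hKexp hfdiff (norm_nonneg _) (by positivity)
        _ = (C * Real.exp T₀ * ε₀) * Real.exp (-‖u‖) := by ring
    calc (∫ u in ball (0:EuclideanSpace ℝ (Fin n)) (c * r), ‖h u‖)
        ≤ ∫ u in ball (0:EuclideanSpace ℝ (Fin n)) (c * r),
            (C * Real.exp T₀ * ε₀) * Real.exp (-‖u‖) :=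
          setIntegral_mono_on hnormint.integrableOn
            (((aux_exp_neg_norm_integrable n).const_mul _).integrableOn)
            measurableSet_ball hb
      _ = (C * Real.exp T₀ * ε₀) *
            ∫ u in ball (0:EuclideanSpace ℝ (Fin n)) (c * r), Real.exp (-‖u‖) :=
          integral_const_mul _ _
      _ ≤ (C * Real.exp T₀ * ε₀) * A :=
          mul_le_mul_of_nonneg_left (setIntegral_le_integral (aux_exp_neg_norm_integrable n)
            (Filter.Eventually.of_forall fun u => (Real.exp_pos _).le)) (by positivity)
      _ = C * Real.exp T₀ * A * ε₀ := by ring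
  have hfar2 : (∫ u in (ball (0:EuclideanSpace ℝ (Fin n)) (c * r))ᶜ, ‖h u‖)
      ≤ D * (δ / (2 * (D + 1))) := by
    have hseteq : (ball (0:EuclideanSpace ℝ (Fin n)) (c * r))ᶜ
        = {u : EuclideanSpace ℝ (Fin n) | c * r ≤ ‖u‖} := by
      ext u
      simp [mem_ball, dist_zero_right, not_lt]
    calc (∫ u in (ball (0:EuclideanSpace ℝ (Fin n)) (c * r))ᶜ, ‖h u‖)
        ≤ ∫ u in (ball (0:EuclideanSpace ℝ (Fin n)) (c * r))ᶜ, D * Real.exp (-‖u‖) :=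
          setIntegral_mono_on hnormint.integrableOn
            (((aux_exp_neg_norm_integrable n).const_mul D).integrableOn)
            measurableSet_ball.compl (fun u _ => hhb u)
      _ = D * ∫ u in (ball (0:EuclideanSpace ℝ (Fin n)) (c * r))ᶜ, Real.exp (-‖u‖) :=
          integral_const_mul _ _
      _ ≤ D * (δ / (2 * (D + 1))) := by
          refine mul_le_mul_of_nonneg_left ?_ hD0
          rw [hseteq]
          exact hT₁ (c * r) hT₁c
  have hP0 : (0:ℝ) ≤ C * Real.exp T₀ * A := by positivity
  have hnear2 : C * Real.exp T₀ * A * ε₀ < δ / 2 := by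
    rw [hε₀def]
    set P := C * Real.exp T₀ * A
    have hq : P * (δ / (2 * (P + 1))) = (P / (P + 1)) * (δ / 2) := by
      rw [div_mul_div_comm, ← mul_div_assoc]
      ring_nf
    rw [hq]
    have hlt1 : P / (P + 1) < 1 := (div_lt_one (by positivity)).mpr (by linarith)
    calc (P / (P + 1)) * (δ / 2) < 1 * (δ / 2) :=
          mul_lt_mul_of_pos_right hlt1 (by positivity)
      _ = δ / 2 := one_mul _
  have hfar3 : D * (δ / (2 * (D + 1))) < δ / 2 := by
    have hq : D * (δ / (2 * (D + 1))) = (D / (D + 1)) * (δ / 2) := by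
      rw [div_mul_div_comm, ← mul_div_assoc]
      ring_nf
    rw [hq]
    have hlt1 : D / (D + 1) < 1 := (div_lt_one (by positivity)).mpr (by linarith)
    calc (D / (D + 1)) * (δ / 2) < 1 * (δ / 2) :=
          mul_lt_mul_of_pos_right hlt1 (by positivity)
      _ = δ / 2 := one_mul _
  calc ‖∫ u, h u‖ ≤ ∫ u, ‖h u‖ := hnormb
    _ = _ := hsplit
    _ < δ := by linarith
end

section
/- Let K : ℝⁿ × ℝⁿ → ℂ satisfy |K(x,y)| ≤ C_l e^{−M(l‖x−y‖)} for every l ∈ ℕ, where M is increasing, superadditive and satisfies M(t+s) ≤ M(2t)+M(2s). Then for every l ∈ ℕ and λ ≥ 1 the operator with kernel K_λ,z(x,y) = 2^{nλ}K(2^λx+z, 2^λy+z) is uniformly bounded on the weighted sup-norm spaces: sup_x e^{M(l‖x‖)} |∫ K_{λ,z}(x,y) u(y) dy| ≤ C sup_y e^{M(2l‖y‖)} |u(y)| with C independent of λ ≥ 1 and z ∈ ℝⁿ. -/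
open MeasureTheory Filter Topology Real

theorem dilated_kernel_uniform_bound (n : ℕ) (M : ℝ → ℝ)
    (hMcont : ContinuousOn M (Set.Ici 0))
    (hMmono : MonotoneOn M (Set.Ici 0))
    (hMnn : ∀ t ≥ (0:ℝ), 0 ≤ M t)
    (hMsuper : ∀ a ≥ (0:ℝ), ∀ b ≥ (0:ℝ), M a + M b ≤ M (a + b))
    (hMdoub : ∀ t ≥ (0:ℝ), ∀ s ≥ (0:ℝ), M (t + s) ≤ M (2 * t) + M (2 * s))
    (hMint : Integrable (fun y : EuclideanSpace ℝ (Fin n) => Real.exp (-(M ‖y‖))))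
    (K : EuclideanSpace ℝ (Fin n) → EuclideanSpace ℝ (Fin n) → ℂ)
    (hK : ∀ l : ℕ, ∃ Cl : ℝ, 0 < Cl ∧
      ∀ x y, ‖K x y‖ ≤ Cl * Real.exp (-(M (l * ‖x - y‖)))) :
    ∀ l : ℕ, ∃ C > (0:ℝ), ∀ lam : ℝ, 1 ≤ lam → ∀ z : EuclideanSpace ℝ (Fin n),
      ∀ u : EuclideanSpace ℝ (Fin n) → ℂ, Continuous u → ∀ D : ℝ,
      (∀ y, ‖u y‖ ≤ D * Real.exp (-(M (2 * l * ‖y‖)))) →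
      ∀ x, ‖∫ y, ((2:ℝ) ^ ((n : ℝ) * lam)) •
              (K ((2:ℝ) ^ lam • x + z) ((2:ℝ) ^ lam • y + z) * u y)‖
        ≤ C * D * Real.exp (-(M (l * ‖x‖))) := by
  intro l
  obtain ⟨C₂, hC₂pos, hC₂⟩ := hK (2 * l + 1)
  set I : ℝ := ∫ y : EuclideanSpace ℝ (Fin n), Real.exp (-(M ‖y‖)) with hIdef
  have hInn : 0 ≤ I := integral_nonneg fun y => (Real.exp_pos _).le
  refine ⟨C₂ * (I + 1), by positivity, ?_⟩
  intro lam hlam z u hucont D hD x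
  have hD0 : 0 ≤ D := by
    have h0 := (norm_nonneg (u 0)).trans (hD 0)
    nlinarith [Real.exp_pos (-(M (2 * l * ‖(0 : EuclideanSpace ℝ (Fin n))‖)))]
  set R : ℝ := (2:ℝ) ^ lam with hRdef
  have hR2 : (2:ℝ) ≤ R := by
    calc (2:ℝ) = (2:ℝ) ^ (1:ℝ) := by rw [Real.rpow_one]
    _ ≤ R := Real.rpow_le_rpow_of_exponent_le (by norm_num) hlam
  have hRpos : (0:ℝ) < R := lt_of_lt_of_le two_pos hR2
  have hpow : (2:ℝ) ^ ((n:ℝ) * lam) = R ^ n := by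
    rw [hRdef, ← Real.rpow_natCast ((2:ℝ) ^ lam) n, ← Real.rpow_mul (by norm_num), mul_comm]
  have hpowpos : (0:ℝ) < (2:ℝ) ^ ((n:ℝ) * lam) := Real.rpow_pos_of_pos two_pos _
  -- pointwise bound
  have key : ∀ y : EuclideanSpace ℝ (Fin n),
      ‖((2:ℝ) ^ ((n : ℝ) * lam)) • (K (R • x + z) (R • y + z) * u y)‖ ≤
      C₂ * D * Real.exp (-(M (l * ‖x‖))) *
        ((2:ℝ) ^ ((n : ℝ) * lam) * Real.exp (-(M ‖R • (y - x)‖))) := by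
    intro y
    have hnorm1 : (R • x + z) - (R • y + z) = R • (x - y) := by
      rw [smul_sub]; abel
    have hnxy : ‖R • (x - y)‖ = R * ‖x - y‖ := by
      rw [norm_smul, Real.norm_eq_abs, abs_of_pos hRpos]
    have hnyx : ‖R • (y - x)‖ = R * ‖x - y‖ := by
      rw [norm_smul, Real.norm_eq_abs, abs_of_pos hRpos, norm_sub_rev]
    set t : ℝ := ‖x - y‖ with htdef
    have ht : 0 ≤ t := norm_nonneg _
    have hy : (0:ℝ) ≤ ‖y‖ := norm_nonneg _
    -- key inequality on M
    have hM1 : M (l * ‖x‖) ≤ M (2 * (l * t)) + M (2 * (l * ‖y‖)) := by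
      have hle : (l:ℝ) * ‖x‖ ≤ l * t + l * ‖y‖ := by
        rw [← mul_add]
        have : ‖x‖ ≤ t + ‖y‖ := by
          calc ‖x‖ = ‖(x - y) + y‖ := by rw [sub_add_cancel]
          _ ≤ ‖x - y‖ + ‖y‖ := norm_add_le _ _
        nlinarith [Nat.cast_nonneg (α := ℝ) l]
      have h1 : M (l * ‖x‖) ≤ M ((l:ℝ) * t + l * ‖y‖) :=
        hMmono (Set.mem_Ici.mpr (by positivity))
          (Set.mem_Ici.mpr (by positivity : (0:ℝ) ≤ (l:ℝ) * t + l * ‖y‖)) hle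
      refine h1.trans ?_
      have ha : (0:ℝ) ≤ (l:ℝ) * t := mul_nonneg (Nat.cast_nonneg l) ht
      have hb : (0:ℝ) ≤ (l:ℝ) * ‖y‖ := mul_nonneg (Nat.cast_nonneg l) hy
      exact hMdoub ((l:ℝ) * t) ha ((l:ℝ) * ‖y‖) hb
    have hM2 : M (2 * (l * t)) + M (R * t) ≤ M ((2 * l + 1 : ℕ) * ‖R • (x - y)‖) := by
      rw [hnxy]
      have hlt : (0:ℝ) ≤ 2 * ((l:ℝ) * t) :=
        mul_nonneg (by norm_num) (mul_nonneg (Nat.cast_nonneg l) ht)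
      have hrt : (0:ℝ) ≤ R * t := mul_nonneg hRpos.le ht
      have h1 : M (2 * ((l:ℝ) * t)) + M (R * t) ≤ M (2 * ((l:ℝ) * t) + R * t) :=
        hMsuper (2 * ((l:ℝ) * t)) hlt (R * t) hrt
      have hmem1 : 2 * ((l:ℝ) * t) + R * t ∈ Set.Ici (0:ℝ) := Set.mem_Ici.mpr (by linarith)
      have hmem2 : ((2 * l + 1 : ℕ) : ℝ) * (R * t) ∈ Set.Ici (0:ℝ) :=
        Set.mem_Ici.mpr (by positivity)
      refine h1.trans (hMmono hmem1 hmem2 ?_)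
      push_cast
      nlinarith [mul_nonneg (mul_nonneg (Nat.cast_nonneg (α := ℝ) l) ht)
        (by linarith : (0:ℝ) ≤ R - 1)]
    -- combine exponentials
    have hexp : Real.exp (-(M ((2 * l + 1 : ℕ) * ‖R • (x - y)‖))) *
        Real.exp (-(M (2 * l * ‖y‖))) ≤
        Real.exp (-(M (l * ‖x‖))) * Real.exp (-(M ‖R • (y - x)‖)) := by
      rw [← Real.exp_add, ← Real.exp_add, Real.exp_le_exp, hnyx]
      have h2 : (2:ℝ) * l * ‖y‖ = 2 * (l * ‖y‖) := by ring
      rw [h2]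
      linarith [hM1, hM2]
    rw [norm_smul, Real.norm_eq_abs, abs_of_pos hpowpos, norm_mul]
    have hKb := hC₂ (R • x + z) (R • y + z)
    rw [hnorm1] at hKb
    have hub := hD y
    calc (2:ℝ) ^ ((n:ℝ) * lam) * (‖K (R • x + z) (R • y + z)‖ * ‖u y‖)
        ≤ (2:ℝ) ^ ((n:ℝ) * lam) *
          ((C₂ * Real.exp (-(M ((2 * l + 1 : ℕ) * ‖R • (x - y)‖)))) *
            (D * Real.exp (-(M (2 * l * ‖y‖))))) := by
          apply mul_le_mul_of_nonneg_left _ hpowpos.le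
          exact mul_le_mul hKb hub (norm_nonneg _) (by positivity)
      _ = C₂ * D * ((2:ℝ) ^ ((n:ℝ) * lam)) *
            (Real.exp (-(M ((2 * l + 1 : ℕ) * ‖R • (x - y)‖))) *
              Real.exp (-(M (2 * l * ‖y‖)))) := by ring
      _ ≤ C₂ * D * ((2:ℝ) ^ ((n:ℝ) * lam)) *
            (Real.exp (-(M (l * ‖x‖))) * Real.exp (-(M ‖R • (y - x)‖))) := by
          apply mul_le_mul_of_nonneg_left hexp (by positivity)
      _ = C₂ * D * Real.exp (-(M (l * ‖x‖))) *
            ((2:ℝ) ^ ((n:ℝ) * lam) * Real.exp (-(M ‖R • (y - x)‖))) := by ring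
  -- integrability of the bound
  have hFint : Integrable (fun w : EuclideanSpace ℝ (Fin n) => Real.exp (-(M ‖R • w‖))) :=
    (integrable_comp_smul_iff volume
      (fun w : EuclideanSpace ℝ (Fin n) => Real.exp (-(M ‖w‖))) hRpos.ne').mpr hMint
  have hGint : Integrable
      (fun y : EuclideanSpace ℝ (Fin n) => Real.exp (-(M ‖R • (y - x)‖))) := by
    have := hFint.comp_sub_right x
    simpa using this
  -- the integral of the bound
  have hint_eq : ∫ y : EuclideanSpace ℝ (Fin n), Real.exp (-(M ‖R • (y - x)‖)) =
      (R ^ n)⁻¹ * I := by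
    rw [show (fun y : EuclideanSpace ℝ (Fin n) => Real.exp (-(M ‖R • (y - x)‖))) =
        (fun w : EuclideanSpace ℝ (Fin n) => Real.exp (-(M ‖R • w‖))) ∘ (fun y => y - x) from rfl]
    rw [show (integral volume ((fun w : EuclideanSpace ℝ (Fin n) =>
        Real.exp (-(M ‖R • w‖))) ∘ (fun y => y - x))) =
        ∫ y : EuclideanSpace ℝ (Fin n), Real.exp (-(M ‖R • (y - x)‖)) from rfl]
    rw [integral_sub_right_eq_self (fun w : EuclideanSpace ℝ (Fin n) =>
      Real.exp (-(M ‖R • w‖))) x]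
    rw [Measure.integral_comp_smul volume
      (fun w : EuclideanSpace ℝ (Fin n) => Real.exp (-(M ‖w‖))) R]
    rw [finrank_euclideanSpace_fin, smul_eq_mul, abs_of_pos (by positivity)]
  calc ‖∫ y, ((2:ℝ) ^ ((n : ℝ) * lam)) • (K (R • x + z) (R • y + z) * u y)‖
      ≤ ∫ y : EuclideanSpace ℝ (Fin n), C₂ * D * Real.exp (-(M (l * ‖x‖))) *
          ((2:ℝ) ^ ((n : ℝ) * lam) * Real.exp (-(M ‖R • (y - x)‖))) := by
        refine norm_integral_le_of_norm_le ?_ (Filter.Eventually.of_forall key)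
        exact ((hGint.const_mul _).const_mul _)
    _ = C₂ * D * Real.exp (-(M (l * ‖x‖))) * ((2:ℝ) ^ ((n : ℝ) * lam) *
          ∫ y : EuclideanSpace ℝ (Fin n), Real.exp (-(M ‖R • (y - x)‖))) := by
        rw [integral_const_mul, integral_const_mul]
    _ = C₂ * D * Real.exp (-(M (l * ‖x‖))) * I := by
        rw [hint_eq, hpow]
        field_simp
    _ ≤ C₂ * (I + 1) * D * Real.exp (-(M (l * ‖x‖))) := by
        have he : (0:ℝ) ≤ Real.exp (-(M (l * ‖x‖))) := (Real.exp_pos _).le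
        nlinarith [mul_nonneg hD0 he, hC₂pos.le]
end
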